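/- arXiv:2109.02630 — 4 statements merged into one kernel-verified Lean document; each statement's English description precedes it below -/
import Mathlib

section
/- Let X be a set of feasible decisions in a type α, let p ≥ 1, let z : Fin p → α → ℝ be objective functions, fix an index q : Fin p, and fix parameters ε : Fin p → ℝ. Suppose x* ∈ X satisfies z k x* ≥ ε k for every k ≠ q, and x* maximizes z q over the ε-constrained feasible set {x ∈ X | ∀ k ≠ q, z k x ≥ ε k} (i.e., for every x ∈ X with z k x ≥ ε k for all k ≠ q, one has z q x ≤ z q x*). Then x* is a weakly efficient solution of the multi-objective maximization problem over X: there is no x ∈ X with z k x > z k x* for every k. -/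
/-- Theorem 1 (Haimes et al., 1971): an optimal solution of the ε-constraint
problem is a weakly efficient solution of the multi-objective problem. -/
theorem epsilon_constraint_weakly_efficient
    {α : Type*} {p : ℕ} (hp : 1 ≤ p)
    (X : Set α) (z : Fin p → α → ℝ) (q : Fin p) (ε : Fin p → ℝ)
    (xstar : α) (hx : xstar ∈ X)
    (hfeas : ∀ k, k ≠ q → z k xstar ≥ ε k)
    (hopt : ∀ x ∈ X, (∀ k, k ≠ q → z k x ≥ ε k) → z q x ≤ z q xstar) :
    ¬ ∃ x ∈ X, ∀ k, z k xstar < z k x := by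
  rintro ⟨x, hxX, hlt⟩
  have h := hopt x hxX (fun k hk => le_of_lt (lt_of_le_of_lt (hfeas k hk) (hlt k)))
  exact absurd (hlt q) (not_lt.mpr h)
end

section
/- Let X be a set of feasible decisions in a type α, let z : Fin p → α → ℝ, fix q : Fin p, parameters ε : Fin p → ℝ, and penalty weights w : Fin p → ℝ with w k > 0 for all k ≠ q. Consider the elastic ε-constraint problem: over triples (x, e⁻, e⁺) with x ∈ X, e⁻ k ≥ 0, e⁺ k ≥ 0, and z k x + e⁻ k − e⁺ k = ε k for all k ≠ q, maximize z q x − ∑_{k ≠ q} w k · e⁻ k. If (x*, e⁻*, e⁺*) is an optimal solution of this problem (i.e., a feasible triple whose objective value is greater than or equal to that of every feasible triple), then x* is a weakly efficient solution of the multi-objective maximization problem over X: there is no x ∈ X with z k x > z k x* for every k. -/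
/-!
If some `x ∈ X` strictly improved every objective at `x*`, take for `x` the smallest surpluses
`e⁻ k = (ε k - z k x)⁺`, `e⁺ k = (ε k - z k x)⁻`. Since `z k x > z k x*`, this `e⁻ k` is at most
the `e⁻* k` of any feasible surplus at `x*`, so `x` is feasible with no larger penalty and a
strictly larger value of `z q`, contradicting the optimality of `(x*, e⁻*, e⁺*)`.
-/

section ElasticSurplus

variable {G : Type*} [AddCommGroup G] [LinearOrder G] [IsOrderedAddMonoid G]

lemma add_posPart_sub_negPart_sub (a b : G) : a + (b - a)⁺ - (b - a)⁻ = b := by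
  rw [add_sub_assoc, posPart_sub_negPart, add_sub_cancel]

lemma posPart_sub_le_of_add_sub_eq {a b e e' : G} (h : a + e - e' = b) (he : 0 ≤ e)
    (he' : 0 ≤ e') : (b - a)⁺ ≤ e :=
  sup_le (by rw [← h, add_sub_assoc, add_sub_cancel_left]; exact sub_le_self e he') he

end ElasticSurplus

theorem elastic_epsilon_constraint_weakly_efficient_general
    {α : Type*} {p : ℕ}
    (X : Set α) (z : Fin p → α → ℝ) (q : Fin p) (ε : Fin p → ℝ)
    (w : Fin p → ℝ) (hw : ∀ k, k ≠ q → 0 < w k)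
    (xstar : α) (eminus eplus : Fin p → ℝ)
    (heminus : ∀ k, k ≠ q → 0 ≤ eminus k)
    (heplus : ∀ k, k ≠ q → 0 ≤ eplus k)
    (heq : ∀ k, k ≠ q → z k xstar + eminus k - eplus k = ε k)
    (hopt : ∀ (x : α) (em ep : Fin p → ℝ),
      x ∈ X → (∀ k, k ≠ q → 0 ≤ em k) → (∀ k, k ≠ q → 0 ≤ ep k) →
      (∀ k, k ≠ q → z k x + em k - ep k = ε k) →
      z q x - ∑ k ∈ Finset.univ.erase q, w k * em k ≤
        z q xstar - ∑ k ∈ Finset.univ.erase q, w k * eminus k) :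
    ¬ ∃ x ∈ X, ∀ k, z k xstar < z k x := by
  rintro ⟨x, hxX, hlt⟩
  have hfeas := hopt x (fun k => (ε k - z k x)⁺) (fun k => (ε k - z k x)⁻) hxX
    (fun k _ => posPart_nonneg _) (fun k _ => negPart_nonneg _)
    (fun k _ => add_posPart_sub_negPart_sub _ _)
  have hpenalty : ∑ k ∈ Finset.univ.erase q, w k * (ε k - z k x)⁺ ≤
      ∑ k ∈ Finset.univ.erase q, w k * eminus k := by
    refine Finset.sum_le_sum fun k hk => ?_
    have hkq : k ≠ q := Finset.ne_of_mem_erase hk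
    have hsurplus : (ε k - z k x)⁺ ≤ eminus k :=
      (posPart_mono (by linarith [hlt k])).trans
        (posPart_sub_le_of_add_sub_eq (heq k hkq) (heminus k hkq) (heplus k hkq))
    exact mul_le_mul_of_nonneg_left hsurplus (hw k hkq).le
  linarith [hlt q]

/-- Theorem 2 (Ehrgott & Ryan, 2003): an optimal solution of the elastic
ε-constraint problem is weakly efficient. -/
theorem elastic_epsilon_constraint_weakly_efficient
    {α : Type*} {p : ℕ}
    (X : Set α) (z : Fin p → α → ℝ) (q : Fin p) (ε : Fin p → ℝ)
    (w : Fin p → ℝ) (hw : ∀ k, k ≠ q → 0 < w k)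
    (xstar : α) (eminus eplus : Fin p → ℝ)
    (hx : xstar ∈ X)
    (heminus : ∀ k, k ≠ q → 0 ≤ eminus k)
    (heplus : ∀ k, k ≠ q → 0 ≤ eplus k)
    (heq : ∀ k, k ≠ q → z k xstar + eminus k - eplus k = ε k)
    (hopt : ∀ (x : α) (em ep : Fin p → ℝ),
      x ∈ X → (∀ k, k ≠ q → 0 ≤ em k) → (∀ k, k ≠ q → 0 ≤ ep k) →
      (∀ k, k ≠ q → z k x + em k - ep k = ε k) →
      z q x - ∑ k ∈ Finset.univ.erase q, w k * em k ≤
        z q xstar - ∑ k ∈ Finset.univ.erase q, w k * eminus k) :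
    ¬ ∃ x ∈ X, ∀ k, z k xstar < z k x :=
  elastic_epsilon_constraint_weakly_efficient_general X z q ε w hw xstar eminus eplus heminus heplus
    heq hopt
end

section
/- Let X be a set of feasible decisions in a type α, let z : Fin p → α → ℝ, fix q : Fin p, parameters ε : Fin p → ℝ, a scalar ρ > 0, and range amplitudes r : Fin p → ℝ with r k > 0 for all k ≠ q. Consider the augmented ε-constraint problem: over pairs (x, s) with x ∈ X, s k ≥ 0 and z k x − s k = ε k for all k ≠ q, maximize z q x + ρ · ∑_{k ≠ q} 10^{k−1} · (s k / r k). If (x*, s*) is an optimal solution of this problem (i.e., a feasible pair whose objective value is greater than or equal to that of every feasible pair), then x* is an efficient solution of the multi-objective maximization problem over X: there is no x ∈ X such that z k x ≥ z k x* for every k with z k x > z k x* for at least one k. -/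
/-!
If `x` dominated `x*`, then `x` with the slacks `s k = z k x - ε k` would be feasible for the
augmented problem, with `z q x ≥ z q x*` and every slack at least the corresponding `s* k`,
one of the two inequalities being strict. Since `ρ` and all the weights `10^(k-1) / r k` are
positive, the augmented objective would strictly increase, contradicting optimality.
-/

open Finset

section WeightedSum

variable {ι : Type*} {S : Finset ι} {w r s t : ι → ℝ}

theorem sum_mul_div_le_sum_mul_div (hw : ∀ k ∈ S, 0 ≤ w k) (hr : ∀ k ∈ S, 0 ≤ r k)
    (hst : ∀ k ∈ S, s k ≤ t k) :
    ∑ k ∈ S, w k * (s k / r k) ≤ ∑ k ∈ S, w k * (t k / r k) :=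
  sum_le_sum fun k hk =>
    mul_le_mul_of_nonneg_left (div_le_div_of_nonneg_right (hst k hk) (hr k hk)) (hw k hk)

theorem sum_mul_div_lt_sum_mul_div (hw : ∀ k ∈ S, 0 < w k) (hr : ∀ k ∈ S, 0 < r k)
    (hst : ∀ k ∈ S, s k ≤ t k) (hlt : ∃ k ∈ S, s k < t k) :
    ∑ k ∈ S, w k * (s k / r k) < ∑ k ∈ S, w k * (t k / r k) := by
  obtain ⟨k, hk, hk_lt⟩ := hlt
  refine sum_lt_sum (fun k hk => ?_) ⟨k, hk, ?_⟩
  · exact mul_le_mul_of_nonneg_left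
      (div_le_div_of_nonneg_right (hst k hk) (hr k hk).le) (hw k hk).le
  · exact mul_lt_mul_of_pos_left (div_lt_div_of_pos_right hk_lt (hr k hk)) (hw k hk)

theorem add_mul_sum_mul_div_lt {a b ρ : ℝ} (hρ : 0 < ρ)
    (hw : ∀ k ∈ S, 0 < w k) (hr : ∀ k ∈ S, 0 < r k)
    (hab : a ≤ b) (hst : ∀ k ∈ S, s k ≤ t k) (hlt : a < b ∨ ∃ k ∈ S, s k < t k) :
    a + ρ * ∑ k ∈ S, w k * (s k / r k) < b + ρ * ∑ k ∈ S, w k * (t k / r k) := by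
  rcases hlt with hab_lt | hst_lt
  · exact add_lt_add_of_lt_of_le hab_lt <| mul_le_mul_of_nonneg_left
      (sum_mul_div_le_sum_mul_div (fun k hk => (hw k hk).le) (fun k hk => (hr k hk).le) hst) hρ.le
  · exact add_lt_add_of_le_of_lt hab <|
      mul_lt_mul_of_pos_left (sum_mul_div_lt_sum_mul_div hw hr hst hst_lt) hρ

end WeightedSum

theorem augmented_epsilon_constraint_efficient_general
    {α : Type*} {p : ℕ}
    (X : Set α) (z : Fin p → α → ℝ) (q : Fin p) (ε : Fin p → ℝ)
    (ρ : ℝ) (hρ : 0 < ρ)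
    (r : Fin p → ℝ) (hr : ∀ k, k ≠ q → 0 < r k)
    (xstar : α) (sstar : Fin p → ℝ)
    (hs : ∀ k, k ≠ q → 0 ≤ sstar k)
    (heq : ∀ k, k ≠ q → z k xstar - sstar k = ε k)
    (hopt : ∀ (x : α) (s : Fin p → ℝ),
      x ∈ X → (∀ k, k ≠ q → 0 ≤ s k) →
      (∀ k, k ≠ q → z k x - s k = ε k) →
      z q x + ρ * ∑ k ∈ Finset.univ.erase q, (10 : ℝ) ^ ((k : ℕ) - 1) * (s k / r k) ≤
        z q xstar + ρ * ∑ k ∈ Finset.univ.erase q, (10 : ℝ) ^ ((k : ℕ) - 1) * (sstar k / r k)) :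
    ¬ ∃ x ∈ X, (∀ k, z k xstar ≤ z k x) ∧ (∃ k, z k xstar < z k x) := by
  rintro ⟨x, hxX, hle, k₀, hk₀⟩
  have hslack_eq (k : Fin p) (hk : k ≠ q) : sstar k + (z k x - z k xstar) = z k x - ε k := by
    linarith [heq k hk]
  have hslack_le (k : Fin p) (hk : k ∈ univ.erase q) : sstar k ≤ z k x - ε k := by
    linarith [hslack_eq k (ne_of_mem_erase hk), hle k]
  have hslack_nonneg (k : Fin p) (hk : k ≠ q) : 0 ≤ z k x - ε k :=
    (hs k hk).trans (hslack_le k (mem_erase.mpr ⟨hk, mem_univ k⟩))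
  have hstrict : z q xstar < z q x ∨ ∃ k ∈ univ.erase q, sstar k < z k x - ε k := by
    rcases eq_or_ne k₀ q with rfl | hk₀q
    · exact Or.inl hk₀
    · exact Or.inr ⟨k₀, mem_erase.mpr ⟨hk₀q, mem_univ k₀⟩, by linarith [hslack_eq k₀ hk₀q]⟩
  refine (hopt x (fun k => z k x - ε k) hxX hslack_nonneg (fun k _ => sub_sub_cancel _ _)).not_gt ?_
  exact add_mul_sum_mul_div_lt hρ (fun k _ => by positivity)
    (fun k hk => hr k (ne_of_mem_erase hk)) (hle q) hslack_le hstrict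

/-- Theorem 3 (Mavrotas, 2009; Mavrotas & Florios, 2013): an optimal solution
of the augmented ε-constraint problem (with slacks added to the objective) is
an efficient solution of the multi-objective problem. -/
theorem augmented_epsilon_constraint_efficient
    {α : Type*} {p : ℕ}
    (X : Set α) (z : Fin p → α → ℝ) (q : Fin p) (ε : Fin p → ℝ)
    (ρ : ℝ) (hρ : 0 < ρ)
    (r : Fin p → ℝ) (hr : ∀ k, k ≠ q → 0 < r k)
    (xstar : α) (sstar : Fin p → ℝ)
    (hx : xstar ∈ X)
    (hs : ∀ k, k ≠ q → 0 ≤ sstar k)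
    (heq : ∀ k, k ≠ q → z k xstar - sstar k = ε k)
    (hopt : ∀ (x : α) (s : Fin p → ℝ),
      x ∈ X → (∀ k, k ≠ q → 0 ≤ s k) →
      (∀ k, k ≠ q → z k x - s k = ε k) →
      z q x + ρ * ∑ k ∈ Finset.univ.erase q, (10 : ℝ) ^ ((k : ℕ) - 1) * (s k / r k) ≤
        z q xstar + ρ * ∑ k ∈ Finset.univ.erase q, (10 : ℝ) ^ ((k : ℕ) - 1) * (sstar k / r k)) :
    ¬ ∃ x ∈ X, (∀ k, z k xstar ≤ z k x) ∧ (∃ k, z k xstar < z k x) :=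
  augmented_epsilon_constraint_efficient_general X z q ε ρ hρ r hr xstar sstar hs heq hopt
end

section
/- Let N ⊆ ℝ × ℝ be a set of mutually non-dominated points in the plane: for any two distinct z, z' ∈ N one has z.1 < z'.1 ↔ z'.2 < z.2 (in particular distinct points of N have distinct first coordinates). Let γ ≥ 0, let m : ℕ, and let r : Fin (m+1) → ℝ × ℝ be points of N with strictly increasing first coordinates (r i).1 < (r (i+1)).1, such that (r 0).1 ≤ z.1 ≤ (r m).1 for every z ∈ N, and such that any two consecutive points are at Chebyshev distance at most γ: max (|(r (i+1)).1 − (r i).1|) (|(r (i+1)).2 − (r i).2|) ≤ γ for all i < m. Then for every z ∈ N there exists an index i such that max (|z.1 − (r i).1|) (|z.2 − (r i).2|) ≤ γ; that is, the coverage error of the representation {r 0, …, r m} with respect to N is at most γ. -/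
/-- Consecutive points of a representation of a bi-objective Pareto front being
within Chebyshev distance γ guarantees coverage error at most γ. -/
theorem consecutive_chebyshev_gap_gives_coverage
    (N : Set (ℝ × ℝ))
    (hnd : ∀ z ∈ N, ∀ z' ∈ N, z ≠ z' → (z.1 < z'.1 ↔ z'.2 < z.2))
    (γ : ℝ) (hγ : 0 ≤ γ) (m : ℕ)
    (r : Fin (m + 1) → ℝ × ℝ)
    (hrN : ∀ i, r i ∈ N)
    (hmono : ∀ i : Fin m, (r i.castSucc).1 < (r i.succ).1)
    (hlow : ∀ z ∈ N, (r 0).1 ≤ z.1)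
    (hhigh : ∀ z ∈ N, z.1 ≤ (r (Fin.last m)).1)
    (hgap : ∀ i : Fin m,
      max |(r i.succ).1 - (r i.castSucc).1| |(r i.succ).2 - (r i.castSucc).2| ≤ γ) :
    ∀ z ∈ N, ∃ i : Fin (m + 1),
      max |z.1 - (r i).1| |z.2 - (r i).2| ≤ γ := by
  -- points of N with equal first coordinates are equal
  have heq : ∀ z ∈ N, ∀ w ∈ N, z.1 = w.1 → z = w := by
    intro z hz w hw h1
    by_contra hne
    have h2 := hnd z hz w hw hne
    have h3 := hnd w hw z hz (Ne.symm hne)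
    have n1 : ¬ w.2 < z.2 := fun hh => by have := h2.mpr hh; linarith
    have n2 : ¬ z.2 < w.2 := fun hh => by have := h3.mpr hh; linarith
    have : z.2 = w.2 := le_antisymm (not_lt.mp n1) (not_lt.mp n2)
    exact hne (Prod.ext h1 this)
  intro z hz
  classical
  set S : Finset (Fin (m + 1)) := Finset.univ.filter (fun i => (r i).1 ≤ z.1) with hS
  have h0S : (0 : Fin (m+1)) ∈ S := by
    simp [hS, hlow z hz]
  have hne : S.Nonempty := ⟨0, h0S⟩
  set i₀ := S.max' hne with hi₀
  have hi₀S : i₀ ∈ S := S.max'_mem hne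
  have hi₀le : (r i₀).1 ≤ z.1 := by simpa [hS] using hi₀S
  by_cases hzr : z = r i₀
  · exact ⟨i₀, by simp [hzr, hγ]⟩
  by_cases hlast : i₀ = Fin.last m
  · exfalso
    apply hzr
    apply heq z hz _ (hrN i₀)
    have := hhigh z hz
    rw [hlast]
    linarith [hi₀le, hlast ▸ hi₀le]
  · -- i₀ < last, so i₀ = j.castSucc for some j : Fin m
    have hlt : (i₀ : ℕ) < m := by
      rcases lt_or_eq_of_le (Nat.lt_succ_iff.mp i₀.isLt) with h | h
      · exact h
      · exact absurd (Fin.ext h) hlast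
    set j : Fin m := ⟨i₀, hlt⟩ with hj
    have hcs : j.castSucc = i₀ := rfl
    have hsuccnot : j.succ ∉ S := by
      intro hmem
      have := S.le_max' _ hmem
      rw [← hi₀] at this
      have : (j.succ : ℕ) ≤ (i₀ : ℕ) := this
      simp [Fin.val_succ, hj] at this
    have hzlt : z.1 < (r j.succ).1 := by
      by_contra h
      exact hsuccnot (by simp [hS]; linarith)
    -- z ≠ r i₀, and first coords differ
    have hfne : (r i₀).1 ≠ z.1 := fun h => hzr (heq z hz _ (hrN i₀) h.symm)
    have ha : (r i₀).1 < z.1 := lt_of_le_of_ne hi₀le hfne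
    have hzb : z ≠ r j.succ := fun h => by rw [h] at hzlt; exact lt_irrefl _ hzlt
    have h2a : z.2 < (r i₀).2 :=
      (hnd (r i₀) (hrN i₀) z hz (fun h => hzr h.symm)).mp ha
    have h2b : (r j.succ).2 < z.2 := (hnd z hz (r j.succ) (hrN j.succ) hzb).mp hzlt
    have hgapj := hgap j
    rw [hcs] at hgapj
    have h1g : |(r j.succ).1 - (r i₀).1| ≤ γ := le_trans (le_max_left _ _) hgapj
    have h2g : |(r j.succ).2 - (r i₀).2| ≤ γ := le_trans (le_max_right _ _) hgapj
    refine ⟨i₀, max_le ?_ ?_⟩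
    · rw [abs_of_pos (by linarith)]
      have := le_of_abs_le h1g
      linarith
    · rw [abs_of_neg (by linarith)]
      have := neg_le_of_abs_le h2g
      linarith
end
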